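/- arXiv:2001.00444 — 7 statements merged into one kernel-verified Lean document; each statement's English description precedes it below -/
import Mathlib

section
/- Let κ : [0,∞) → [0,∞) be a continuous nonnegative function, let T > 0, and let s_{-κ} be the solution of s'' - κ·s = 0 with s(0)=0, s'(0)=1. Then for all s ∈ [0,T], s ≤ s_{-κ}(s) ≤ sinh(√(κ(T))·s)/√(κ(T)), provided κ is nondecreasing and κ(T) > 0. -/
/-!
Energy identities give the lower bound: `(g g')' = g'² + κ g² ≥ 0` and `(g'²)' = 2κ g g' ≥ 0`,
so `g'² ≥ 1`; as `g'` is continuous with `g'(0) = 1`, this forces `g' ≥ 1`, hence `g(s) ≥ s ≥ 0`.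
For the upper bound, `u = sinh(ks)/k - g` with `k² = κ(T)` satisfies `u'' ≥ k² u` on `[0, T]`
(because `κ ≤ κ(T)` there and `g ≥ 0`) with `u(0) = u'(0) = 0`. Factoring
`u'' - k² u = (D - k)(D + k) u`, both `e^{-ks}(u' + k u)` and `e^{ks} u` are nondecreasing,
so `u ≥ 0`.
-/

open Set Real

theorem le_of_hasDerivAt_nonneg {f f' : ℝ → ℝ} {a b : ℝ} (hf : ∀ t, HasDerivAt f (f' t) t)
    (hf' : ∀ t ∈ Ioo a b, 0 ≤ f' t) : ∀ t ∈ Icc a b, f a ≤ f t := by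
  intro t ht
  have hmono : MonotoneOn f (Icc a b) :=
    monotoneOn_of_hasDerivWithinAt_nonneg (convex_Icc a b)
      (fun x _ => (hf x).continuousAt.continuousWithinAt) (fun x _ => (hf x).hasDerivWithinAt)
      (by simpa only [interior_Icc] using hf')
  exact hmono (left_mem_Icc.2 (ht.1.trans ht.2)) ht ht.1

theorem deriv_ge_of_hasDerivAt_deriv_eq_nonneg_mul {f f' p : ℝ → ℝ} {a b : ℝ}
    (hf : ∀ t, HasDerivAt f (f' t) t) (hf' : ∀ t, HasDerivAt f' (p t * f t) t)
    (hp : ∀ t ∈ Ioo a b, 0 ≤ p t) (ha : 0 ≤ f a) (ha' : 0 < f' a) :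
    ∀ t ∈ Icc a b, f' a ≤ f' t := by
  have hprod : ∀ t ∈ Icc a b, f a * f' a ≤ f t * f' t :=
    le_of_hasDerivAt_nonneg (fun t => (hf t).mul (hf' t)) fun t ht => by
      rw [mul_left_comm]
      exact add_nonneg (mul_self_nonneg _) (mul_nonneg (hp t ht) (mul_self_nonneg _))
  have hsq : ∀ t ∈ Icc a b, f' a * f' a ≤ f' t * f' t :=
    le_of_hasDerivAt_nonneg (fun t => (hf' t).mul (hf' t)) fun t ht => by
      have hff' : 0 ≤ f t * f' t :=
        (mul_nonneg ha ha'.le).trans (hprod t (Ioo_subset_Icc_self ht))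
      nlinarith [hp t ht]
  intro t ht
  by_contra! hlt
  have hneg : f' t < 0 := by nlinarith [hsq t ht]
  have hcont : Continuous f' := continuous_iff_continuousAt.2 fun x => (hf' x).continuousAt
  obtain ⟨s, hs, hs0⟩ :=
    intermediate_value_Icc' ht.1 hcont.continuousOn ⟨hneg.le, ha'.le⟩
  have := hsq s ⟨hs.1, hs.2.trans ht.2⟩
  rw [hs0] at this
  nlinarith

theorem nonneg_of_hasDerivAt_deriv_ge_mul {f f' f'' : ℝ → ℝ} {c a b : ℝ} (hc : 0 ≤ c)
    (hf : ∀ t, HasDerivAt f (f' t) t) (hf' : ∀ t, HasDerivAt f' (f'' t) t)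
    (h : ∀ t ∈ Ioo a b, c * f t ≤ f'' t) (ha : 0 ≤ f a) (ha' : 0 ≤ f' a) :
    ∀ t ∈ Icc a b, 0 ≤ f t := by
  set k := √c
  have hk : k * k = c := mul_self_sqrt hc
  have hdamped : ∀ t, HasDerivAt (fun t => exp (-k * t) * (f' t + k * f t))
      (exp (-k * t) * (f'' t - c * f t)) t := fun t =>
    ((hasDerivAt_const_mul (-k)).exp.mul ((hf' t).add ((hf t).const_mul k))).congr_deriv
      (by rw [← hk, Pi.add_apply]; ring)
  have hfirst : ∀ t ∈ Icc a b, 0 ≤ f' t + k * f t := fun t ht => by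
    have hmono := le_of_hasDerivAt_nonneg hdamped
      (fun t ht => mul_nonneg (exp_pos _).le (sub_nonneg.2 (h t ht))) t ht
    have hstart : 0 ≤ f' a + k * f a := add_nonneg ha' (mul_nonneg (sqrt_nonneg c) ha)
    exact nonneg_of_mul_nonneg_right ((mul_nonneg (exp_pos _).le hstart).trans hmono) (exp_pos _)
  have hgrowth : ∀ t, HasDerivAt (fun t => exp (k * t) * f t)
      (exp (k * t) * (f' t + k * f t)) t := fun t =>
    ((hasDerivAt_const_mul k).exp.mul (hf t)).congr_deriv (by ring)
  intro t ht
  have hmono := le_of_hasDerivAt_nonneg hgrowth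
    (fun t ht => mul_nonneg (exp_pos _).le (hfirst t (Ioo_subset_Icc_self ht))) t ht
  exact nonneg_of_mul_nonneg_right ((mul_nonneg (exp_pos _).le ha).trans hmono) (exp_pos _)

theorem hasDerivAt_sinh_mul_div {k : ℝ} (hk : k ≠ 0) (t : ℝ) :
    HasDerivAt (fun t => sinh (k * t) / k) (cosh (k * t)) t :=
  ((hasDerivAt_const_mul k).sinh.div_const k).congr_deriv (by field_simp)

theorem hasDerivAt_cosh_mul (k t : ℝ) : HasDerivAt (fun t => cosh (k * t)) (k * sinh (k * t)) t :=
  (hasDerivAt_const_mul k).cosh.congr_deriv (mul_comm _ _)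

theorem jacobi_negative_curvature_comparison_general
    (κ g gd : ℝ → ℝ) (T : ℝ)
    (hκnonneg : ∀ t, 0 ≤ t → 0 ≤ κ t)
    (hκmono : ∀ t₁ t₂, 0 ≤ t₁ → t₁ ≤ t₂ → κ t₁ ≤ κ t₂)
    (hκT : 0 < κ T)
    (hg : ∀ t, HasDerivAt g (gd t) t)
    (hgd : ∀ t, HasDerivAt gd (κ t * g t) t)
    (h0 : g 0 = 0) (h0' : gd 0 = 1) :
    ∀ s ∈ Icc (0 : ℝ) T,
      s ≤ g s ∧ g s ≤ Real.sinh (Real.sqrt (κ T) * s) / Real.sqrt (κ T) := by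
  set k := √(κ T)
  have hk : 0 < k := sqrt_pos.2 hκT
  have hslope : ∀ t ∈ Icc 0 T, 1 ≤ gd t := by
    simpa only [h0'] using deriv_ge_of_hasDerivAt_deriv_eq_nonneg_mul hg hgd
      (fun t ht => hκnonneg t ht.1.le) h0.ge (h0'.symm ▸ one_pos)
  have hlower : ∀ t ∈ Icc 0 T, t ≤ g t := fun t ht => by
    have := le_of_hasDerivAt_nonneg (fun t => (hg t).sub (hasDerivAt_id' t))
      (fun t ht => sub_nonneg.2 (hslope t (Ioo_subset_Icc_self ht))) t ht
    simp only [Pi.sub_apply, h0, sub_zero] at this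
    linarith
  have hupper : ∀ t ∈ Icc 0 T, 0 ≤ sinh (k * t) / k - g t := by
    refine nonneg_of_hasDerivAt_deriv_ge_mul hκT.le
      (fun t => (hasDerivAt_sinh_mul_div hk.ne' t).sub (hg t))
      (fun t => (hasDerivAt_cosh_mul k t).sub (hgd t)) (fun t ht => ?_) (by simp [h0])
      (by simp [h0'])
    have hκ : κ t * g t ≤ κ T * g t := mul_le_mul_of_nonneg_right
      (hκmono t T ht.1.le ht.2.le) (ht.1.le.trans (hlower t (Ioo_subset_Icc_self ht)))
    have hsinh : κ T * (sinh (k * t) / k) = k * sinh (k * t) := by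
      have hkk : k * k = κ T := mul_self_sqrt hκT.le
      rw [← hkk]
      field_simp
    linarith
  exact fun s hs => ⟨hlower s hs, sub_nonneg.1 (hupper s hs)⟩

/-- If κ : [0,∞) → [0,∞) is continuous, nonnegative, nondecreasing with
κ(T) > 0, and g solves g'' - κ g = 0 with g(0)=0, g'(0)=1, then for all s ∈ [0,T],
s ≤ g(s) ≤ sinh(√(κ(T))·s)/√(κ(T)). -/
theorem jacobi_negative_curvature_comparison
    (κ g gd : ℝ → ℝ) (T : ℝ) (hT : 0 < T)
    (hκcont : ContinuousOn κ (Ici 0))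
    (hκnonneg : ∀ t, 0 ≤ t → 0 ≤ κ t)
    (hκmono : ∀ t₁ t₂, 0 ≤ t₁ → t₁ ≤ t₂ → κ t₁ ≤ κ t₂)
    (hκT : 0 < κ T)
    (hg : ∀ t, HasDerivAt g (gd t) t)
    (hgd : ∀ t, HasDerivAt gd (κ t * g t) t)
    (h0 : g 0 = 0) (h0' : gd 0 = 1) :
    ∀ s ∈ Icc (0 : ℝ) T,
      s ≤ g s ∧ g s ≤ Real.sinh (Real.sqrt (κ T) * s) / Real.sqrt (κ T) :=
  jacobi_negative_curvature_comparison_general κ g gd T hκnonneg hκmono hκT hg hgd h0 h0'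
end

section
/- Let λ : (0,S) → ℝ be a C¹ function satisfying the Riccati differential inequality -λ'(s) ≥ (n-m)κ(s) + λ(s)²/(n-m) for all s ∈ (0,S), where n - m > 0 and κ : [0,∞) → ℝ is continuous, and suppose limsup_{s→0⁺} s·λ(s) ≤ n - m. Let m_κ(s) := (n-m)·𝔰_κ'(s)/𝔰_κ(s), where 𝔰_κ solves 𝔰'' + κ𝔰 = 0 with 𝔰(0)=0, 𝔰'(0)=1, and let δ_κ be the first positive zero of 𝔰_κ. Then λ(s) ≤ m_κ(s) for all s ∈ (0, min(S, δ_κ)). -/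
/-!
With `N = n - m` and `g = 𝔰² λ - N 𝔰 𝔰'`, the Riccati inequality and the Jacobi equation give
`N g' ≤ -(𝔰 λ - N 𝔰')²`, so `g` is nonincreasing and it suffices that `g` gets arbitrarily small
near `0`. As `𝔰 0 = 0`, we have `𝔰 = O(t)` and `𝔰 𝔰' → 0`, so it is enough that `t² λ(t)` gets
arbitrarily small. If instead `t² λ ≥ ε` near `0`, then `λ → ∞`, the Riccati inequality becomes
`λ' ≤ -λ² / (2N)`, and integrating `(1 / λ)' ≥ 1 / (2N)` from `0` gives `t λ(t) ≤ 2N`, so that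
`t² λ(t) → 0` after all.
-/

open Set Filter Topology

theorem antitoneOn_of_hasDerivAt_nonpos {D : Set ℝ} (hD : Convex ℝ D) (hDo : IsOpen D)
    {f f' : ℝ → ℝ} (hf : ∀ x ∈ D, HasDerivAt f (f' x) x) (hf' : ∀ x ∈ D, f' x ≤ 0) :
    AntitoneOn f D :=
  antitoneOn_of_hasDerivWithinAt_nonpos hD
    (fun x hx => (hf x hx).continuousAt.continuousWithinAt)
    (by rw [hDo.interior_eq]; exact fun x hx => (hf x hx).hasDerivWithinAt)
    (by rwa [hDo.interior_eq])

theorem mul_le_inv_of_riccati {f f' : ℝ → ℝ} {c δ : ℝ} (hc : 0 < c)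
    (hf : ∀ t ∈ Ioo 0 δ, HasDerivAt f (f' t) t) (hpos : ∀ t ∈ Ioo 0 δ, 0 < f t)
    (hric : ∀ t ∈ Ioo 0 δ, c * f t ^ 2 ≤ -f' t) :
    ∀ t ∈ Ioo 0 δ, t * f t ≤ c⁻¹ := by
  -- `ψ` is antitone because `(1 / f)' ≥ c`; if `ψ t > 0`, then `ψ a ≥ a` at `a = min t (ψ t)`,
  -- which `f a > 0` forbids.
  set ψ : ℝ → ℝ := fun t => t - (c * f t)⁻¹
  have hψ : AntitoneOn ψ (Ioo 0 δ) := by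
    refine antitoneOn_of_hasDerivAt_nonpos (convex_Ioo 0 δ) isOpen_Ioo
      (fun t ht => (hasDerivAt_id t).sub (((hf t ht).const_mul c).inv
        (by have := hpos t ht; positivity))) (fun t ht => ?_)
    have hft := hpos t ht
    rw [sub_nonpos, le_div_iff₀ (by positivity)]
    nlinarith [hric t ht]
  intro t ht
  have hψt : ψ t ≤ 0 := by
    by_contra! hψt
    set a := min t (ψ t)
    have ha : a ∈ Ioo 0 δ := ⟨lt_min ht.1 hψt, (min_le_left _ _).trans_lt ht.2⟩
    have hψa : ψ t ≤ ψ a := hψ ha ht (min_le_left _ _)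
    have hfa : 0 < (c * f a)⁻¹ := by have := hpos a ha; positivity
    have haψ : a ≤ ψ t := min_le_right _ _
    simp only [ψ] at hψa
    linarith
  have hft := hpos t ht
  have htf : t ≤ (c * f t)⁻¹ := by simpa [ψ, sub_nonpos] using hψt
  calc t * f t ≤ (c * f t)⁻¹ * f t := by gcongr
    _ = c⁻¹ := by field_simp

theorem eventually_mul_le_inv_of_riccati {f f' : ℝ → ℝ} {c : ℝ} (hc : 0 < c)
    (h : ∀ᶠ t in 𝓝[>] 0, HasDerivAt f (f' t) t ∧ 0 < f t ∧ c * f t ^ 2 ≤ -f' t) :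
    ∀ᶠ t in 𝓝[>] (0 : ℝ), t * f t ≤ c⁻¹ := by
  obtain ⟨δ, hδ, hsub⟩ := mem_nhdsGT_iff_exists_Ioo_subset.mp h
  filter_upwards [Ioo_mem_nhdsGT hδ] with t ht
  exact mul_le_inv_of_riccati hc (fun t ht => (hsub ht).1) (fun t ht => (hsub ht).2.1)
    (fun t ht => (hsub ht).2.2) t ht

theorem frequently_sq_mul_lt_of_riccati {N K : ℝ} {κ lam lamd : ℝ → ℝ} (hN : 0 < N)
    (hκ : ∀ᶠ t in 𝓝[>] 0, -K ≤ κ t) (hlam : ∀ᶠ t in 𝓝[>] 0, HasDerivAt lam (lamd t) t)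
    (hRic : ∀ᶠ t in 𝓝[>] 0, N * κ t + lam t ^ 2 / N ≤ -lamd t) {ε : ℝ} (hε : 0 < ε) :
    ∃ᶠ t in 𝓝[>] (0 : ℝ), t ^ 2 * lam t < ε := by
  by_contra! hlarge
  have hpos : ∀ᶠ t in 𝓝[>] (0 : ℝ), 0 < t := self_mem_nhdsWithin
  have htop : Tendsto lam (𝓝[>] 0) atTop := by
    refine tendsto_atTop_mono' _ ?_ <|
      ((tendsto_pow_atTop two_ne_zero).comp tendsto_inv_nhdsGT_zero).const_mul_atTop hε
    filter_upwards [hpos, hlarge] with t ht hlt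
    rw [Function.comp_apply, inv_pow, ← div_eq_mul_inv, div_le_iff₀ (by positivity)]
    linarith
  -- once `λ² ≥ 2N²K`, the Riccati inequality gives `λ² / (2N) ≤ -λ'`
  have hblowup := eventually_mul_le_inv_of_riccati (f := lam) (by positivity : 0 < (2 * N)⁻¹) <| by
    filter_upwards [hκ, hlam, hRic, htop.eventually_ge_atTop (max 1 (2 * N ^ 2 * K))]
      with t hκt hlamt hRict hbig
    have h1 := le_max_left 1 (2 * N ^ 2 * K)
    have h2 := le_max_right 1 (2 * N ^ 2 * K)
    refine ⟨hlamt, by linarith, ?_⟩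
    have hsq : lam t ^ 2 = N * (lam t ^ 2 / N) := by field_simp
    rw [inv_mul_eq_div, div_le_iff₀ (by positivity)]
    nlinarith
  have hsmall : ∀ᶠ t in 𝓝[>] (0 : ℝ), t < ε / (2 * N) :=
    eventually_nhdsWithin_of_eventually_nhds (eventually_lt_nhds (by positivity))
  obtain ⟨t, ht, hlt, hbt, hst⟩ := (hpos.and (hlarge.and (hblowup.and hsmall))).exists
  refine lt_irrefl ε ?_
  calc ε ≤ t * (t * lam t) := by rwa [← mul_assoc, ← sq]
    _ ≤ t * (2 * N) := by rw [inv_inv] at hbt; gcongr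
    _ < ε := by rw [lt_div_iff₀ (by positivity)] at hst; linarith

theorem antitoneOn_sq_mul_sub_of_riccati {N a b : ℝ} {κ lam lamd 𝔰 𝔰d : ℝ → ℝ} (hN : 0 < N)
    (hlam : ∀ t ∈ Ioo a b, HasDerivAt lam (lamd t) t)
    (hRic : ∀ t ∈ Ioo a b, N * κ t + lam t ^ 2 / N ≤ -lamd t)
    (h𝔰 : ∀ t, HasDerivAt 𝔰 (𝔰d t) t) (h𝔰d : ∀ t, HasDerivAt 𝔰d (-(κ t * 𝔰 t)) t) :
    AntitoneOn (fun t => 𝔰 t ^ 2 * lam t - N * (𝔰 t * 𝔰d t)) (Ioo a b) := by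
  refine antitoneOn_of_hasDerivAt_nonpos (convex_Ioo a b) isOpen_Ioo
    (fun t ht => (((h𝔰 t).pow 2).mul (hlam t ht)).sub (((h𝔰 t).mul (h𝔰d t)).const_mul N))
    (fun t ht => ?_)
  have hRicN : N ^ 2 * κ t + lam t ^ 2 ≤ N * -lamd t := by
    have := mul_le_mul_of_nonneg_left (hRic t ht) hN.le
    rwa [mul_add, mul_div_cancel₀ _ hN.ne', ← mul_assoc, ← sq] at this
  -- `N` times the derivative is at most `-(𝔰 λ - N 𝔰')²`
  norm_num only [Pi.pow_apply]
  nlinarith [sq_nonneg (𝔰 t * lam t - N * 𝔰d t), mul_le_mul_of_nonneg_left hRicN (sq_nonneg (𝔰 t))]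

theorem frequently_sq_mul_sub_lt {N ε : ℝ} {lam 𝔰 𝔰d : ℝ → ℝ} (h𝔰 : DifferentiableAt ℝ 𝔰 0)
    (h𝔰d : ContinuousAt 𝔰d 0) (h0 : 𝔰 0 = 0)
    (hlam : ∀ δ > 0, ∃ᶠ t in 𝓝[>] (0 : ℝ), t ^ 2 * lam t < δ) (hε : 0 < ε) :
    ∃ᶠ t in 𝓝[>] (0 : ℝ), 𝔰 t ^ 2 * lam t - N * (𝔰 t * 𝔰d t) < ε := by
  obtain ⟨C, hC, hCbound⟩ := h𝔰.isBigO_sub.exists_pos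
  have hcont : Tendsto (fun t => N * (𝔰 t * 𝔰d t)) (𝓝 0) (𝓝 0) := by
    simpa [h0] using ((h𝔰.continuousAt.mul h𝔰d).const_mul N).tendsto
  refine ((hlam (ε / (2 * C ^ 2)) (by positivity)).and_eventually
    (eventually_nhdsWithin_of_eventually_nhds (hCbound.bound.and
      (hcont.eventually (eventually_gt_nhds (neg_lt_zero.mpr (half_pos hε))))))).mono ?_
  rintro t ⟨hlamt, h𝔰t, h𝔰𝔰dt⟩
  simp only [h0, sub_zero, Real.norm_eq_abs] at h𝔰t
  have hsq : 𝔰 t ^ 2 ≤ C ^ 2 * t ^ 2 := by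
    rw [← mul_pow]; exact sq_le_sq.mpr (by rwa [abs_mul, abs_of_pos hC])
  have : 𝔰 t ^ 2 * lam t < ε / 2 := by
    rcases le_or_gt (lam t) 0 with hneg | hpos
    · nlinarith [sq_nonneg (𝔰 t)]
    · calc 𝔰 t ^ 2 * lam t ≤ C ^ 2 * (t ^ 2 * lam t) := by nlinarith
        _ < C ^ 2 * (ε / (2 * C ^ 2)) := by gcongr
        _ = ε / 2 := by field_simp
  linarith

theorem riccati_comparison_general
    (n m S : ℝ) (hnm : 0 < n - m)
    (κ lam lamd 𝔰 𝔰d : ℝ → ℝ)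
    (hκ : ContinuousOn κ (Ici 0))
    (hlam : ∀ s ∈ Ioo 0 S, HasDerivAt lam (lamd s) s)
    (hRic : ∀ s ∈ Ioo 0 S, (n - m) * κ s + (lam s) ^ 2 / (n - m) ≤ -lamd s)
    (h𝔰 : ∀ t, HasDerivAt 𝔰 (𝔰d t) t)
    (h𝔰d : ∀ t, HasDerivAt 𝔰d (-(κ t * 𝔰 t)) t)
    (h0 : 𝔰 0 = 0) :
    ∀ s : ℝ, 0 < s → s < S → (∀ u : ℝ, 0 < u → u ≤ s → 𝔰 u ≠ 0) →
      lam s ≤ (n - m) * (𝔰d s / 𝔰 s) := by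
  intro s hs hsS h𝔰ne
  have hnear : ∀ᶠ t in 𝓝[>] (0 : ℝ), t ∈ Ioo 0 s := Ioo_mem_nhdsGT hs
  have hsub : Ioo 0 s ⊆ Ioo 0 S := Ioo_subset_Ioo_right hsS.le
  have hκ0 : ∀ᶠ t in 𝓝[>] (0 : ℝ), -(1 - κ 0) ≤ κ t :=
    nhdsWithin_mono 0 Ioi_subset_Ici_self <|
      ((hκ 0 self_mem_Ici).eventually (eventually_gt_nhds (sub_one_lt (κ 0)))).mono
        fun t ht => by linarith
  have hsmall (δ : ℝ) (hδ : 0 < δ) : ∃ᶠ t in 𝓝[>] (0 : ℝ), t ^ 2 * lam t < δ :=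
    frequently_sq_mul_lt_of_riccati hnm hκ0 (hnear.mono fun t ht => hlam t (hsub ht))
      (hnear.mono fun t ht => hRic t (hsub ht)) hδ
  have hgs : 𝔰 s ^ 2 * lam s - (n - m) * (𝔰 s * 𝔰d s) ≤ 0 := by
    by_contra! hpos
    obtain ⟨t, hgt, ht⟩ := ((frequently_sq_mul_sub_lt (h𝔰 0).differentiableAt
      (h𝔰d 0).continuousAt h0 hsmall hpos).and_eventually hnear).exists
    exact hgt.not_ge (antitoneOn_sq_mul_sub_of_riccati hnm hlam hRic h𝔰 h𝔰d (hsub ht)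
      ⟨hs, hsS⟩ ht.2.le)
  have h𝔰s : 0 < 𝔰 s ^ 2 := by have := h𝔰ne s hs le_rfl; positivity
  rw [show (n - m) * (𝔰d s / 𝔰 s) = (n - m) * (𝔰 s * 𝔰d s) / 𝔰 s ^ 2 by field_simp,
    le_div_iff₀ h𝔰s]
  linarith

/-- Riccati comparison: If λ is C¹ on (0,S), satisfies
-λ'(s) ≥ (n-m)κ(s) + λ(s)²/(n-m) on (0,S) with limsup_{s→0⁺} s·λ(s) ≤ n-m,
then λ(s) ≤ m_κ(s) = (n-m)𝔰_κ'(s)/𝔰_κ(s) for all s ∈ (0, min(S, δ_κ)). -/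
theorem riccati_comparison
    (n m S : ℝ) (hnm : 0 < n - m) (hS : 0 < S)
    (κ lam lamd 𝔰 𝔰d : ℝ → ℝ)
    (hκ : ContinuousOn κ (Ici 0))
    (hlam : ∀ s ∈ Ioo 0 S, HasDerivAt lam (lamd s) s)
    (hlamd : ContinuousOn lamd (Ioo 0 S))
    (hRic : ∀ s ∈ Ioo 0 S, (n - m) * κ s + (lam s) ^ 2 / (n - m) ≤ -lamd s)
    (hlimsup : limsup (fun s => s * lam s) (nhdsWithin 0 (Ioi 0)) ≤ n - m)
    (h𝔰 : ∀ t, HasDerivAt 𝔰 (𝔰d t) t)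
    (h𝔰d : ∀ t, HasDerivAt 𝔰d (-(κ t * 𝔰 t)) t)
    (h0 : 𝔰 0 = 0) (h0' : 𝔰d 0 = 1) :
    ∀ s : ℝ, 0 < s → s < S → (∀ u : ℝ, 0 < u → u ≤ s → 𝔰 u ≠ 0) →
      lam s ≤ (n - m) * (𝔰d s / 𝔰 s) :=
  riccati_comparison_general n m S hnm κ lam lamd 𝔰 𝔰d hκ hlam hRic h𝔰 h𝔰d h0
end

section
/- Let λ : (0,S) → ℝ be a C¹ function satisfying -λ'(s) ≥ (n-m)κ(s) + λ(s)²/(n-m) on (0,S) with limsup_{s→0⁺} s·λ(s) ≤ n - m, where n - m > 0 and κ is continuous. If the first positive zero δ_κ of the Jacobi solution 𝔰_κ is finite, then S ≤ δ_κ; i.e., λ cannot remain finite beyond δ_κ. -/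
/-!
Write `k = n - m` and `δ` for the first positive zero of `𝔰`, and suppose `δ < S`. On `[0, δ]`
the curvature is bounded, `-κ ≤ K`, so `λ' ≤ k K - λ² / k`, and comparison with the explicit
supersolutions `k / (s - a) + D (s - a)` (poles at `a`) shows that `λ`, being finite on `(0, δ]`,
is bounded below near `0` and satisfies `λ s ≤ k / s + D s`. With `F' = λ`, the Wronskian-type
quantity `e^{F / k} (λ 𝔰 - k 𝔰')` has derivative `e^{F / k} 𝔰 (λ' + k κ + λ² / k) ≤ 0` on `(0, δ)`
and its limit superior at `0` is `≤ 0`; hence `λ 𝔰 ≤ k 𝔰'` on `(0, δ)`. Letting `s → δ` gives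
`𝔰'(δ) ≥ 0`, while `𝔰 > 0` on `(0, δ)` gives `𝔰'(δ) ≤ 0`. So `𝔰` and `𝔰'` both vanish at `δ`,
and uniqueness for the Jacobi equation (an energy estimate) contradicts `𝔰'(0) = 1`.
-/

open Set Filter Topology Real

section FirstZero

variable {f : ℝ → ℝ}

lemma tendsto_div_self_nhdsGT_zero {d : ℝ} (hf : HasDerivAt f d 0) (h0 : f 0 = 0) :
    Tendsto (fun s => f s / s) (𝓝[>] 0) (𝓝 d) := by
  simpa [h0, div_eq_inv_mul] using hf.tendsto_slope_zero_right

lemma eventually_pos_nhdsGT_zero {d : ℝ} (hf : HasDerivAt f d 0) (h0 : f 0 = 0) (hd : 0 < d) :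
    ∀ᶠ s in 𝓝[>] 0, 0 < f s := by
  filter_upwards [(tendsto_div_self_nhdsGT_zero hf h0).eventually (eventually_gt_nhds hd),
    self_mem_nhdsWithin] with s hs (hs0 : 0 < s)
  exact (div_pos_iff_of_pos_right hs0).1 hs

lemma sInf_pos_zeros_pos (hpos : ∀ᶠ s in 𝓝[>] 0, 0 < f s)
    (hne : {s : ℝ | 0 < s ∧ f s = 0}.Nonempty) : 0 < sInf {s : ℝ | 0 < s ∧ f s = 0} := by
  obtain ⟨u, hu, hsub⟩ := mem_nhdsGT_iff_exists_Ioo_subset.1 hpos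
  refine lt_of_lt_of_le hu (le_csInf hne fun z ⟨hz, hfz⟩ => ?_)
  by_contra! hzu
  exact (hsub ⟨hz, hzu⟩ : 0 < f z).ne' hfz

lemma apply_sInf_pos_zeros (hf : Continuous f) (hne : {s : ℝ | 0 < s ∧ f s = 0}.Nonempty) :
    f (sInf {s : ℝ | 0 < s ∧ f s = 0}) = 0 :=
  closure_minimal (fun _ h => h.2) (isClosed_eq hf continuous_const)
    (csInf_mem_closure hne ⟨0, fun _ h => h.1.le⟩)

lemma pos_of_lt_sInf_pos_zeros (hf : Continuous f) (hpos : ∀ᶠ s in 𝓝[>] 0, 0 < f s) :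
    ∀ s ∈ Ioo 0 (sInf {s : ℝ | 0 < s ∧ f s = 0}), 0 < f s := by
  intro s ⟨hs, hsδ⟩
  by_contra! hfs
  obtain ⟨t, hft, ht⟩ := (hpos.and (Ioo_mem_nhdsGT hs)).exists
  obtain ⟨r, hr, hfr⟩ := intermediate_value_Icc' ht.2.le hf.continuousOn ⟨hfs, hft.le⟩
  have : sInf {s : ℝ | 0 < s ∧ f s = 0} ≤ r :=
    csInf_le ⟨0, fun _ h => h.1.le⟩ ⟨ht.1.trans_le hr.1, hfr⟩
  linarith [hr.2]

lemma HasDerivAt.nonpos_of_pos_left {d a b : ℝ} (hf : HasDerivAt f d b) (hab : a < b)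
    (hb : f b = 0) (hpos : ∀ s ∈ Ioo a b, 0 < f s) : d ≤ 0 := by
  refine le_of_tendsto (hasDerivAt_iff_tendsto_slope_left_right.1 hf).1 ?_
  filter_upwards [Ioo_mem_nhdsLT hab] with s hs
  rw [slope_def_field, hb, sub_zero]
  exact div_nonpos_of_nonneg_of_nonpos (hpos s hs).le (by linarith [hs.2])

end FirstZero

lemma jacobi_eq_zero_of_eq_zero {κ u u' : ℝ → ℝ} {a b : ℝ} (hab : a ≤ b)
    (hκ : ContinuousOn κ (Icc a b)) (hu : ∀ t ∈ Icc a b, HasDerivAt u (u' t) t)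
    (hu' : ∀ t ∈ Icc a b, HasDerivAt u' (-(κ t * u t)) t) (hb : u b = 0) (hb' : u' b = 0) :
    u a = 0 ∧ u' a = 0 := by
  obtain ⟨C, hC⟩ := isCompact_Icc.exists_bound_of_continuousOn hκ
  -- the energy `(u² + u'²) e^{(1 + C) t}` is nondecreasing as long as `|κ| ≤ C`
  set e := fun t => (u t ^ 2 + u' t ^ 2) * exp ((1 + C) * t)
  have he : ∀ t ∈ Icc a b, HasDerivAt e
      ((2 * (1 - κ t) * u t * u' t + (1 + C) * (u t ^ 2 + u' t ^ 2)) * exp ((1 + C) * t)) t := by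
    intro t ht
    refine ((((hu t ht).pow 2).add ((hu' t ht).pow 2)).mul
      (((hasDerivAt_id t).const_mul (1 + C)).exp)).congr_deriv ?_
    simp only [id, Pi.add_apply, Pi.pow_apply]
    ring
  have hmono : MonotoneOn e (Icc a b) := by
    refine monotoneOn_of_hasDerivWithinAt_nonneg (convex_Icc a b)
      (fun t ht => (he t ht).continuousAt.continuousWithinAt)
      (fun t ht => (he t (interior_subset ht)).hasDerivWithinAt) fun t ht => ?_
    have hκt := abs_le.1 (Real.norm_eq_abs _ ▸ hC t (interior_subset ht))
    refine mul_nonneg ?_ (exp_pos _).le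
    nlinarith [mul_nonneg (by linarith : 0 ≤ 1 + C - (1 - κ t)) (sq_nonneg (u t - u' t)),
      mul_nonneg (by linarith : 0 ≤ 1 + C + (1 - κ t)) (sq_nonneg (u t + u' t))]
  have hle : e a ≤ e b := hmono ⟨le_rfl, hab⟩ ⟨hab, le_rfl⟩ hab
  simp only [e, hb, hb'] at hle
  have : u a ^ 2 + u' a ^ 2 ≤ 0 := by
    nlinarith [exp_pos ((1 + C) * a)]
  constructor <;> nlinarith [sq_nonneg (u a), sq_nonneg (u' a)]

/-- `k / (s - a)` solves `λ' = -λ² / k` with a pole at `a`; the linear term turns it into a strict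
supersolution of `λ' ≤ k K - λ² / k` once `k K < 3 D`. -/
noncomputable def riccatiBarrier (k D a s : ℝ) : ℝ := k / (s - a) + D * (s - a)

section RiccatiBarrier

variable {k K D a s : ℝ}

lemma hasDerivAt_riccatiBarrier (hs : s ≠ a) :
    HasDerivAt (riccatiBarrier k D a) (-(k / (s - a) ^ 2) + D) s := by
  have hsa : s - a ≠ 0 := sub_ne_zero.2 hs
  have h : HasDerivAt (fun t => t - a) 1 s := (hasDerivAt_id s).sub_const a
  refine (((hasDerivAt_const s k).div h hsa).add (h.const_mul D)).congr_deriv ?_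
  field_simp
  ring

lemma neg_riccatiBarrier_neg (k D a s : ℝ) :
    -riccatiBarrier k D a (-s) = riccatiBarrier k D (-a) s := by
  rw [riccatiBarrier, riccatiBarrier, show -s - a = -(s - -a) by ring, div_neg]
  ring

lemma riccati_lt_deriv_riccatiBarrier (hk : 0 < k) (hD : k * K < 3 * D) (hs : s ≠ a) :
    k * K - riccatiBarrier k D a s ^ 2 / k < -(k / (s - a) ^ 2) + D := by
  have hsa : s - a ≠ 0 := sub_ne_zero.2 hs
  have hsq : riccatiBarrier k D a s ^ 2 / k
      = k / (s - a) ^ 2 + 2 * D + D ^ 2 * (s - a) ^ 2 / k := by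
    rw [riccatiBarrier]
    field_simp
    ring
  have : 0 ≤ D ^ 2 * (s - a) ^ 2 / k := by positivity
  linarith

lemma tendsto_riccatiBarrier_nhdsLT (hk : 0 < k) :
    Tendsto (riccatiBarrier k D a) (𝓝[<] a) atBot := by
  have hsub : Tendsto (fun s => s - a) (𝓝[<] a) (𝓝[<] 0) := by
    refine tendsto_nhdsWithin_of_tendsto_nhds_of_eventually_within _ ?_ ?_
    · simpa using ((continuous_sub_right a).tendsto a).mono_left nhdsWithin_le_nhds
    · filter_upwards [self_mem_nhdsWithin] with s (hs : s < a)
      exact sub_neg.2 hs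
  have hpole : Tendsto (fun s => k / (s - a)) (𝓝[<] a) atBot := by
    simpa [div_eq_mul_inv] using (tendsto_inv_nhdsLT_zero.comp hsub).const_mul_atBot hk
  exact hpole.atBot_add ((hsub.mono_right nhdsWithin_le_nhds).const_mul D)

variable {f f' : ℝ → ℝ}

lemma riccatiBarrier_le_of_lt (hk : 0 < k) (hD : k * K < 3 * D) (hsa : s < a)
    (hf : ∀ t ∈ Icc s a, HasDerivAt f (f' t) t)
    (hric : ∀ t ∈ Icc s a, f' t ≤ k * K - f t ^ 2 / k) :
    riccatiBarrier k D a s ≤ f s := by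
  by_contra! hlt
  have hbelow : ∀ x ∈ Ico s a, f x ≤ riccatiBarrier k D a x := fun x hx =>
    image_le_of_deriv_right_lt_deriv_boundary'
      (fun t ht => (hf t ⟨ht.1, ht.2.trans hx.2.le⟩).continuousAt.continuousWithinAt)
      (fun t ht => (hf t ⟨ht.1, ht.2.le.trans hx.2.le⟩).hasDerivWithinAt) hlt.le
      (fun t ht =>
        (hasDerivAt_riccatiBarrier (ht.2.trans_lt hx.2).ne).continuousAt.continuousWithinAt)
      (fun t ht => (hasDerivAt_riccatiBarrier (ht.2.trans hx.2).ne).hasDerivWithinAt)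
      (fun t ht heq => (hric t ⟨ht.1, ht.2.le.trans hx.2.le⟩).trans_lt
        (heq ▸ riccati_lt_deriv_riccatiBarrier hk hD (ht.2.trans hx.2).ne))
      ⟨hx.1, le_rfl⟩
  have hbot : Tendsto f (𝓝[<] a) atBot := by
    refine tendsto_atBot_mono' _ ?_ (tendsto_riccatiBarrier_nhdsLT (D := D) hk)
    filter_upwards [Ioo_mem_nhdsLT hsa] with t ht
    exact hbelow t ⟨ht.1.le, ht.2⟩
  exact not_tendsto_atBot_of_tendsto_nhds
    (hf a ⟨hsa.le, le_rfl⟩).continuousAt.continuousWithinAt hbot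

lemma le_riccatiBarrier_of_lt (hk : 0 < k) (hD : k * K < 3 * D) (has : a < s)
    (hf : ∀ t ∈ Icc a s, HasDerivAt f (f' t) t)
    (hric : ∀ t ∈ Icc a s, f' t ≤ k * K - f t ^ 2 / k) :
    f s ≤ riccatiBarrier k D a s := by
  -- `t ↦ -f (-t)` satisfies the same Riccati inequality
  have hreflect := riccatiBarrier_le_of_lt (f := fun t => -f (-t)) (f' := fun t => f' (-t)) hk hD
    (neg_lt_neg has)
    (fun t ht => by
      simpa using ((hf (-t) ⟨le_neg.1 ht.2, neg_le.1 ht.1⟩).comp t (hasDerivAt_neg t)).fun_neg)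
    (fun t ht => by simpa using hric (-t) ⟨le_neg.1 ht.2, neg_le.1 ht.1⟩)
  rw [← neg_riccatiBarrier_neg, neg_neg] at hreflect
  linarith

lemma eventually_le_div_add_mul_of_riccati (hk : 0 < k) (hD : k * K < 3 * D) (ha : 0 < a)
    (hf : ∀ t ∈ Ioc 0 a, HasDerivAt f (f' t) t)
    (hric : ∀ t ∈ Ioc 0 a, f' t ≤ k * K - f t ^ 2 / k) :
    ∀ᶠ s in 𝓝[>] 0, f s ≤ k / s + D * s := by
  filter_upwards [Ioo_mem_nhdsGT ha] with s hs
  have hcont : ContinuousAt (fun c => riccatiBarrier k D c s) 0 := by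
    unfold riccatiBarrier
    exact ContinuousAt.add (continuousAt_const.div (by fun_prop) (by simpa using hs.1.ne'))
      (by fun_prop)
  have hlim : Tendsto (fun c => riccatiBarrier k D c s) (𝓝[>] 0) (𝓝 (k / s + D * s)) := by
    simpa [riccatiBarrier] using hcont.tendsto.mono_left nhdsWithin_le_nhds
  refine ge_of_tendsto hlim ?_
  filter_upwards [Ioo_mem_nhdsGT hs.1] with c hc
  exact le_riccatiBarrier_of_lt hk hD hc.2
    (fun t ht => hf t ⟨hc.1.trans_le ht.1, ht.2.trans hs.2.le⟩)
    (fun t ht => hric t ⟨hc.1.trans_le ht.1, ht.2.trans hs.2.le⟩)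

lemma isBoundedUnder_ge_of_riccati (hk : 0 < k) (hD : k * K < 3 * D) (ha : 0 < a)
    (hf : ∀ t ∈ Ioc 0 a, HasDerivAt f (f' t) t)
    (hric : ∀ t ∈ Ioc 0 a, f' t ≤ k * K - f t ^ 2 / k) :
    IsBoundedUnder (· ≥ ·) (𝓝[>] 0) f := by
  have hcont : ContinuousAt (riccatiBarrier k D a) 0 :=
    (hasDerivAt_riccatiBarrier ha.ne).continuousAt
  refine (hcont.tendsto.mono_left nhdsWithin_le_nhds).isBoundedUnder_ge.mono_ge ?_
  filter_upwards [Ioo_mem_nhdsGT ha] with s hs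
  exact riccatiBarrier_le_of_lt hk hD hs.2 (fun t ht => hf t ⟨hs.1.trans_le ht.1, ht.2⟩)
    (fun t ht => hric t ⟨hs.1.trans_le ht.1, ht.2⟩)

end RiccatiBarrier

lemma ContinuousOn.hasDerivAt_integral_of_mem_Ioo {f : ℝ → ℝ} {a b c s : ℝ}
    (hf : ContinuousOn f (Ioo a b)) (hc : c ∈ Ioo a b) (hs : s ∈ Ioo a b) :
    HasDerivAt (fun x => ∫ t in c..x, f t) (f s) s :=
  intervalIntegral.integral_hasDerivAt_right
    ((hf.mono (ordConnected_Ioo.uIcc_subset hc hs)).intervalIntegrable)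
    (hf.stronglyMeasurableAtFilter isOpen_Ioo s hs) (hf.continuousAt (Ioo_mem_nhds hs.1 hs.2))

lemma exists_hasDerivAt_isBoundedUnder_le {f : ℝ → ℝ} {b : ℝ} (hf : ContinuousOn f (Ioo 0 b))
    (hb : 0 < b) (hbdd : IsBoundedUnder (· ≥ ·) (𝓝[>] 0) f) :
    ∃ F : ℝ → ℝ, (∀ s ∈ Ioo 0 b, HasDerivAt F (f s) s) ∧ IsBoundedUnder (· ≤ ·) (𝓝[>] 0) F := by
  obtain ⟨M, hM⟩ := hbdd
  obtain ⟨c, hc, hcM⟩ := mem_nhdsGT_iff_exists_Ioo_subset.1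
    ((eventually_map.1 hM).and (Ioo_mem_nhdsGT hb))
  have hcb : Ioo 0 c ⊆ Ioo 0 b := fun s hs => (hcM hs).2
  have hx₀ : c / 2 ∈ Ioo 0 c := ⟨half_pos hc, half_lt_self hc⟩
  set F := fun x => ∫ t in c / 2..x, f t
  have hF : ∀ s ∈ Ioo 0 b, HasDerivAt F (f s) s :=
    fun s hs => hf.hasDerivAt_integral_of_mem_Ioo (hcb hx₀) hs
  refine ⟨F, hF, ⟨|M| * (c / 2), ?_⟩⟩
  rw [eventually_map]
  filter_upwards [Ioo_mem_nhdsGT hx₀.1] with s hs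
  have hmvt := (convex_Ioo 0 c).mul_sub_le_image_sub_of_le_deriv
    (fun x hx => (hF x (hcb hx)).continuousAt.continuousWithinAt)
    (fun x hx => (hF x (hcb (interior_subset hx))).differentiableAt.differentiableWithinAt)
    (fun x hx => (hF x (hcb (interior_subset hx))).deriv ▸ (hcM (interior_subset hx)).1)
    s ⟨hs.1, hs.2.trans hx₀.2⟩ (c / 2) hx₀ hs.2.le
  have hFx₀ : F (c / 2) = 0 := intervalIntegral.integral_same
  have : M * (c / 2 - s) ≥ -(|M| * (c / 2)) := by
    nlinarith [abs_nonneg M, neg_abs_le M, hs.1, hs.2]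
  show F s ≤ |M| * (c / 2)
  linarith

section SturmComparison

variable {k b : ℝ} {κ lam lam' u u' F : ℝ → ℝ}

lemma antitoneOn_exp_mul_riccati_sub (hk : 0 < k)
    (hF : ∀ s ∈ Ioo 0 b, HasDerivAt F (lam s) s)
    (hlam : ∀ s ∈ Ioo 0 b, HasDerivAt lam (lam' s) s)
    (hric : ∀ s ∈ Ioo 0 b, k * κ s + lam s ^ 2 / k ≤ -lam' s)
    (hu : ∀ s ∈ Ioo 0 b, HasDerivAt u (u' s) s)
    (hu' : ∀ s ∈ Ioo 0 b, HasDerivAt u' (-(κ s * u s)) s)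
    (hpos : ∀ s ∈ Ioo 0 b, 0 ≤ u s) :
    AntitoneOn (fun s => exp (F s / k) * (lam s * u s - k * u' s)) (Ioo 0 b) := by
  have hderiv : ∀ s ∈ Ioo 0 b, HasDerivAt (fun s => exp (F s / k) * (lam s * u s - k * u' s))
      (exp (F s / k) * (u s * (lam s ^ 2 / k + lam' s + k * κ s))) s := by
    intro s hs
    refine (((hF s hs).div_const k).exp.mul
      (((hlam s hs).mul (hu s hs)).sub ((hu' s hs).const_mul k))).congr_deriv ?_
    simp only [Pi.sub_apply, Pi.mul_apply]
    field_simp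
    ring
  refine antitoneOn_of_hasDerivWithinAt_nonpos (convex_Ioo 0 b)
    (fun s hs => (hderiv s hs).continuousAt.continuousWithinAt)
    (fun s hs => (hderiv s (interior_subset hs)).hasDerivWithinAt) fun s hs => ?_
  rw [interior_Ioo] at hs
  exact mul_nonpos_of_nonneg_of_nonpos (exp_pos _).le
    (mul_nonpos_of_nonneg_of_nonpos (hpos s hs) (by linarith [hric s hs]))

lemma mul_le_mul_deriv_of_riccati {D : ℝ} (hk : 0 < k) (hb : 0 < b)
    (hF : ∀ s ∈ Ioo 0 b, HasDerivAt F (lam s) s) (hFbdd : IsBoundedUnder (· ≤ ·) (𝓝[>] 0) F)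
    (hlam : ∀ s ∈ Ioo 0 b, HasDerivAt lam (lam' s) s)
    (hric : ∀ s ∈ Ioo 0 b, k * κ s + lam s ^ 2 / k ≤ -lam' s)
    (hup : ∀ᶠ s in 𝓝[>] 0, lam s ≤ k / s + D * s)
    (hu : ∀ s ∈ Ico 0 b, HasDerivAt u (u' s) s)
    (hu' : ∀ s ∈ Ico 0 b, HasDerivAt u' (-(κ s * u s)) s)
    (hu0 : u 0 = 0) (hu'0 : u' 0 = 1) (hpos : ∀ s ∈ Ioo 0 b, 0 ≤ u s) :
    ∀ t ∈ Ioo 0 b, lam t * u t ≤ k * u' t := by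
  have h0 : (0 : ℝ) ∈ Ico 0 b := ⟨le_rfl, hb⟩
  have hanti := antitoneOn_exp_mul_riccati_sub hk hF hlam hric
    (fun s hs => hu s (Ioo_subset_Ico_self hs)) (fun s hs => hu' s (Ioo_subset_Ico_self hs)) hpos
  set g := fun s => (k / s + D * s) * u s - k * u' s
  -- `g` bounds `lam * u - k * u'` near `0`, where `u s / s → 1` and `u' s → 1`
  have hg : Tendsto g (𝓝[>] 0) (𝓝 0) := by
    have hdiv := tendsto_div_self_nhdsGT_zero (hu'0 ▸ hu 0 h0) hu0
    have hu'1 : Tendsto u' (𝓝[>] 0) (𝓝 1) :=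
      hu'0 ▸ (hu' 0 h0).continuousAt.tendsto.mono_left nhdsWithin_le_nhds
    have hsu : Tendsto (fun s => D * s * u s) (𝓝[>] 0) (𝓝 0) := by
      simpa [hu0] using (((continuous_const.mul continuous_id).tendsto 0).mul
        (hu 0 h0).continuousAt.tendsto).mono_left (nhdsWithin_le_nhds (s := Ioi 0))
    have hlim := ((hdiv.const_mul k).add hsu).sub (hu'1.const_mul k)
    rw [mul_one, add_zero, sub_self] at hlim
    refine hlim.congr' ?_
    filter_upwards [self_mem_nhdsWithin] with s (hs : 0 < s)
    simp only [g]
    field_simp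
  have hexp : IsBoundedUnder (· ≤ ·) (𝓝[>] 0) (norm ∘ fun s => exp (F s / k)) := by
    obtain ⟨B, hB⟩ := hFbdd
    refine ⟨exp (B / k), eventually_map.2 ?_⟩
    filter_upwards [eventually_map.1 hB] with s hs
    simpa [Real.norm_eq_abs, abs_of_pos (exp_pos _)] using div_le_div_of_nonneg_right hs hk.le
  intro t ht
  have hφ : exp (F t / k) * (lam t * u t - k * u' t) ≤ 0 := by
    refine ge_of_tendsto (isBoundedUnder_le_mul_tendsto_zero hexp hg) ?_
    filter_upwards [Ioo_mem_nhdsGT ht.1, hup] with s hs hups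
    refine (hanti ⟨hs.1, hs.2.trans ht.2⟩ ht hs.2.le).trans ?_
    exact mul_le_mul_of_nonneg_left (by nlinarith [hpos s ⟨hs.1, hs.2.trans ht.2⟩])
      (exp_pos _).le
  linarith [nonpos_of_mul_nonpos_right hφ (exp_pos _)]

lemma nonneg_of_forall_mul_le_of_eq_zero {a : ℝ} (hk : 0 < k) (hab : a < b)
    (hlam : ContinuousAt lam b) (hu : ContinuousAt u b) (hu' : ContinuousAt u' b) (hub : u b = 0)
    (hle : ∀ t ∈ Ioo a b, lam t * u t ≤ k * u' t) : 0 ≤ u' b := by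
  have hlim : Tendsto (fun s => k * u' s - lam s * u s) (𝓝[<] b) (𝓝 (k * u' b)) := by
    simpa [hub] using ((hu'.tendsto.const_mul k).sub (hlam.tendsto.mul hu.tendsto)).mono_left
      (nhdsWithin_le_nhds (s := Iio b))
  have hkb : 0 ≤ k * u' b := by
    refine ge_of_tendsto hlim ?_
    filter_upwards [Ioo_mem_nhdsLT hab] with s hs
    linarith [hle s hs]
  exact nonneg_of_mul_nonneg_right hkb hk

end SturmComparison

theorem riccati_explosion_general
    (n m S : ℝ) (hnm : 0 < n - m)
    (κ lam lamd 𝔰 𝔰d : ℝ → ℝ)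
    (hκ : ContinuousOn κ (Ici 0))
    (hlam : ∀ s ∈ Ioo 0 S, HasDerivAt lam (lamd s) s)
    (hRic : ∀ s ∈ Ioo 0 S, (n - m) * κ s + (lam s) ^ 2 / (n - m) ≤ -lamd s)
    (h𝔰 : ∀ t, HasDerivAt 𝔰 (𝔰d t) t)
    (h𝔰d : ∀ t, HasDerivAt 𝔰d (-(κ t * 𝔰 t)) t)
    (h0 : 𝔰 0 = 0) (h0' : 𝔰d 0 = 1)
    (hne : {s : ℝ | 0 < s ∧ 𝔰 s = 0}.Nonempty) :
    S ≤ sInf {s : ℝ | 0 < s ∧ 𝔰 s = 0} := by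
  set δ := sInf {s : ℝ | 0 < s ∧ 𝔰 s = 0}
  have h𝔰c : Continuous 𝔰 := continuous_iff_continuousAt.2 fun t => (h𝔰 t).continuousAt
  have hnear : ∀ᶠ s in 𝓝[>] 0, 0 < 𝔰 s := eventually_pos_nhdsGT_zero (h0' ▸ h𝔰 0) h0 one_pos
  have hδ : 0 < δ := sInf_pos_zeros_pos hnear hne
  have h𝔰δ : 𝔰 δ = 0 := apply_sInf_pos_zeros h𝔰c hne
  have hpos : ∀ s ∈ Ioo 0 δ, 0 < 𝔰 s := pos_of_lt_sInf_pos_zeros h𝔰c hnear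
  by_contra! hSδ
  obtain ⟨K, hK⟩ := isCompact_Icc.exists_bound_of_continuousOn (hκ.mono Icc_subset_Ici_self)
  obtain ⟨D, hD⟩ : ∃ D, (n - m) * K < 3 * D := ⟨(n - m) * K / 3 + 1, by linarith⟩
  have hlam' : ∀ t ∈ Ioc 0 δ, HasDerivAt lam (lamd t) t :=
    fun t ht => hlam t ⟨ht.1, ht.2.trans_lt hSδ⟩
  have hric : ∀ t ∈ Ioc 0 δ, lamd t ≤ (n - m) * K - lam t ^ 2 / (n - m) := by
    intro t ht
    have hκt := (abs_le.1 (Real.norm_eq_abs _ ▸ hK t (Ioc_subset_Icc_self ht))).1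
    nlinarith [hRic t ⟨ht.1, ht.2.trans_lt hSδ⟩]
  obtain ⟨F, hF, hFbdd⟩ := exists_hasDerivAt_isBoundedUnder_le
    (fun t ht => (hlam' t (Ioo_subset_Ioc_self ht)).continuousAt.continuousWithinAt) hδ
    (isBoundedUnder_ge_of_riccati hnm hD hδ hlam' hric)
  have hW := mul_le_mul_deriv_of_riccati hnm hδ hF hFbdd
    (fun s hs => hlam' s (Ioo_subset_Ioc_self hs)) (fun s hs => hRic s ⟨hs.1, hs.2.trans hSδ⟩)
    (eventually_le_div_add_mul_of_riccati hnm hD hδ hlam' hric) (fun s _ => h𝔰 s)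
    (fun s _ => h𝔰d s) h0 h0' (fun s hs => (hpos s hs).le)
  have h𝔰dδ : 𝔰d δ = 0 := le_antisymm ((h𝔰 δ).nonpos_of_pos_left hδ h𝔰δ hpos)
    (nonneg_of_forall_mul_le_of_eq_zero hnm hδ (hlam' δ ⟨hδ, le_rfl⟩).continuousAt
      (h𝔰 δ).continuousAt (h𝔰d δ).continuousAt h𝔰δ hW)
  have h𝔰d0 := (jacobi_eq_zero_of_eq_zero hδ.le (hκ.mono Icc_subset_Ici_self) (fun t _ => h𝔰 t)
    (fun t _ => h𝔰d t) h𝔰δ h𝔰dδ).2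
  exact one_ne_zero (h0' ▸ h𝔰d0)

/-- Under the Riccati differential inequality
-λ' ≥ (n-m)κ + λ²/(n-m) on (0,S) with limsup_{s→0⁺} s·λ(s) ≤ n-m, if the first
positive zero δ_κ of the Jacobi solution 𝔰_κ is finite, then S ≤ δ_κ:
λ cannot remain finite beyond δ_κ. -/
theorem riccati_explosion
    (n m S : ℝ) (hnm : 0 < n - m) (hS : 0 < S)
    (κ lam lamd 𝔰 𝔰d : ℝ → ℝ)
    (hκ : ContinuousOn κ (Ici 0))
    (hlam : ∀ s ∈ Ioo 0 S, HasDerivAt lam (lamd s) s)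
    (hlamd : ContinuousOn lamd (Ioo 0 S))
    (hRic : ∀ s ∈ Ioo 0 S, (n - m) * κ s + (lam s) ^ 2 / (n - m) ≤ -lamd s)
    (hlimsup : limsup (fun s => s * lam s) (nhdsWithin 0 (Ioi 0)) ≤ n - m)
    (h𝔰 : ∀ t, HasDerivAt 𝔰 (𝔰d t) t)
    (h𝔰d : ∀ t, HasDerivAt 𝔰d (-(κ t * 𝔰 t)) t)
    (h0 : 𝔰 0 = 0) (h0' : 𝔰d 0 = 1)
    (hne : {s : ℝ | 0 < s ∧ 𝔰 s = 0}.Nonempty) :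
    S ≤ sInf {s : ℝ | 0 < s ∧ 𝔰 s = 0} :=
  riccati_explosion_general n m S hnm κ lam lamd 𝔰 𝔰d hκ hlam hRic h𝔰 h𝔰d h0 h0' hne
end

section
/- The condition K(p): ∫_{r₀}^∞ dr / ( √(K(e^{-2φ̲_p(r)/(n-m)} r)) · e^{-2φ̲_p(r)/(n-m)} ) = +∞ for some r₀ > 0, is independent of the base point p: if it holds for one p ∈ M, it holds for every q ∈ M. -/
open Set Filter MeasureTheory Metric

/-!
Since `closedBall q r ⊆ closedBall p (r + d(p,q))`, we have `φ̲_p(r + d(p,q)) ≤ φ̲_q(r)`, and the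
integrand is nonincreasing both in `r` and in the value of `φ̲`. Hence the integrand for `p`,
shifted by `d(p,q)`, is dominated by the integrand for `q`: if the `q`-integral converged on
`(r₀, ∞)`, the `p`-integral would converge on `(r₀ + d(p,q), ∞)`, and also on `(r₀, r₀ + d(p,q)]`,
where its integrand is monotone and hence bounded.
-/

section InfimumOnBalls

variable {M : Type*} [PseudoMetricSpace M] {φ : M → ℝ}

theorem sInf_image_closedBall_le_of_subset {p q : M} {R r : ℝ}
    (hbdd : BddBelow (φ '' closedBall p R)) (hr : 0 ≤ r)
    (hsub : closedBall q r ⊆ closedBall p R) :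
    sInf (φ '' closedBall p R) ≤ sInf (φ '' closedBall q r) :=
  csInf_le_csInf hbdd ((nonempty_closedBall.2 hr).image φ) (image_mono hsub)

theorem antitoneOn_sInf_image_closedBall {x : M} (hbdd : ∀ r, BddBelow (φ '' closedBall x r)) :
    AntitoneOn (fun r => sInf (φ '' closedBall x r)) (Ici 0) :=
  fun _ ha _ _ hab =>
    sInf_image_closedBall_le_of_subset (hbdd _) ha (closedBall_subset_closedBall hab)

theorem sInf_image_closedBall_add_dist_le {p q : M} {r : ℝ}
    (hbdd : BddBelow (φ '' closedBall p (r + dist p q))) (hr : 0 ≤ r) :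
    sInf (φ '' closedBall p (r + dist p q)) ≤ sInf (φ '' closedBall q r) :=
  sInf_image_closedBall_le_of_subset hbdd hr (closedBall_subset_closedBall' (by rw [dist_comm]))

end InfimumOnBalls

/-- The integrand of condition K(p) at radius `r`, with `y` standing for `φ̲_p(r)` and `c` for
`n - m`. -/
noncomputable def kIntegrand (K : ℝ → ℝ) (c y r : ℝ) : ℝ :=
  1 / (Real.sqrt (K (Real.exp (-2 * y / c) * r)) * Real.exp (-2 * y / c))

theorem kIntegrand_nonneg (K : ℝ → ℝ) (c y r : ℝ) : 0 ≤ kIntegrand K c y r :=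
  one_div_nonneg.2 (mul_nonneg (Real.sqrt_nonneg _) (Real.exp_pos _).le)

theorem kIntegrand_le_kIntegrand {K : ℝ → ℝ} (hKpos : ∀ r, 0 ≤ r → 0 < K r)
    (hKmono : MonotoneOn K (Ici 0)) {c y y' r r' : ℝ} (hc : 0 < c) (hy : y' ≤ y) (hr : 0 ≤ r)
    (hr' : r ≤ r') : kIntegrand K c y' r' ≤ kIntegrand K c y r := by
  have hexp : Real.exp (-2 * y / c) ≤ Real.exp (-2 * y' / c) :=
    Real.exp_le_exp.2 (div_le_div_of_nonneg_right (by linarith) hc.le)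
  have hK : K (Real.exp (-2 * y / c) * r) ≤ K (Real.exp (-2 * y' / c) * r') :=
    hKmono (mul_nonneg (Real.exp_pos _).le hr) (mul_nonneg (Real.exp_pos _).le (hr.trans hr'))
      (mul_le_mul hexp hr' hr (Real.exp_pos _).le)
  exact one_div_le_one_div_of_le
    (mul_pos (Real.sqrt_pos.2 (hKpos _ (by positivity))) (Real.exp_pos _))
    (mul_le_mul (Real.sqrt_le_sqrt hK) hexp (Real.exp_pos _).le (Real.sqrt_nonneg _))

theorem AntitoneOn.integrableOn_Ioi_of_norm_comp_add_le {f g : ℝ → ℝ} {a s : ℝ} (hs : 0 ≤ s)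
    (hf : AntitoneOn f (Ici a)) (hfg : ∀ r > a, ‖f (r + s)‖ ≤ ‖g r‖)
    (hg : IntegrableOn g (Ioi a)) : IntegrableOn f (Ioi a) := by
  have hshift_anti : AntitoneOn (fun r => f (r + s)) (Ioi a) := fun x hx y hy hxy =>
    hf (le_add_of_le_of_nonneg (le_of_lt hx) hs) (le_add_of_le_of_nonneg (le_of_lt hy) hs)
      (add_le_add_left hxy s)
  have hshift : IntegrableOn (fun r => f (r + s)) (Ioi a) :=
    Integrable.mono hg
      (aemeasurable_restrict_of_antitoneOn measurableSet_Ioi hshift_anti).aestronglyMeasurable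
      ((ae_restrict_mem measurableSet_Ioi).mono hfg)
  have htail : IntegrableOn f (Ioi (a + s)) := by
    rw [← (measurePreserving_add_right volume s).integrableOn_comp_preimage
      (measurableEmbedding_addRight s), preimage_add_const_Ioi, add_sub_cancel_right]
    exact hshift
  have hhead : IntegrableOn f (Ioc a (a + s)) :=
    ((hf.mono Icc_subset_Ici_self).integrableOn_isCompact isCompact_Icc).mono_set
      Ioc_subset_Icc_self
  rw [← Ioc_union_Ioi_eq_Ioi (le_add_of_nonneg_right hs)]
  exact hhead.union htail

theorem condition_K_base_point_independent_general
    {M : Type*} [MetricSpace M] (φ : M → ℝ)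
    (hbdd : ∀ (x : M) (r : ℝ), BddBelow (φ '' closedBall x r))
    (n m : ℝ) (hnm : 0 < n - m)
    (K : ℝ → ℝ) (hKpos : ∀ r, 0 ≤ r → 0 < K r)
    (hKmono : ∀ r₁ r₂, 0 ≤ r₁ → r₁ ≤ r₂ → K r₁ ≤ K r₂)
    (φlow : M → ℝ → ℝ) (hφlow : ∀ x r, φlow x r = sInf (φ '' closedBall x r))
    (p : M)
    (hp : ∃ r₀ > (0:ℝ), ¬ IntegrableOn
      (fun r => 1 / (Real.sqrt (K (Real.exp (-2 * φlow p r / (n - m)) * r)) *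
        Real.exp (-2 * φlow p r / (n - m)))) (Ioi r₀) volume) :
    ∀ q : M, ∃ r₀ > (0:ℝ), ¬ IntegrableOn
      (fun r => 1 / (Real.sqrt (K (Real.exp (-2 * φlow q r / (n - m)) * r)) *
        Real.exp (-2 * φlow q r / (n - m)))) (Ioi r₀) volume := by
  intro q
  obtain ⟨r₀, hr₀, hp⟩ := hp
  refine ⟨r₀, hr₀, fun hq => hp ?_⟩
  have hKmono' : MonotoneOn K (Ici 0) := fun a ha _ _ hab => hKmono _ _ ha hab
  have hφ_anti : AntitoneOn (φlow p) (Ici 0) := by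
    rw [show φlow p = _ from funext (hφlow p)]
    exact antitoneOn_sInf_image_closedBall (hbdd p)
  have hφ_shift (r : ℝ) (hr : 0 ≤ r) : φlow p (r + dist p q) ≤ φlow q r := by
    simpa only [hφlow] using sInf_image_closedBall_add_dist_le (hbdd p _) hr
  refine AntitoneOn.integrableOn_Ioi_of_norm_comp_add_le
    (f := fun r => kIntegrand K (n - m) (φlow p r) r)
    (g := fun r => kIntegrand K (n - m) (φlow q r) r) (dist_nonneg (x := p) (y := q)) (fun x hx y hy hxy => ?_) (fun r hr => ?_) hq
  · have hx₀ : (0:ℝ) ≤ x := hr₀.le.trans hx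
    exact kIntegrand_le_kIntegrand hKpos hKmono' hnm (hφ_anti hx₀ (hx₀.trans hxy) hxy) hx₀ hxy
  · simp only [Real.norm_of_nonneg (kIntegrand_nonneg _ _ _ _)]
    exact kIntegrand_le_kIntegrand hKpos hKmono' hnm (hφ_shift r (hr₀.trans hr).le)
      (hr₀.trans hr).le (le_add_of_nonneg_right dist_nonneg)

/-- The condition K(p):
∫_{r₀}^∞ dr / ( √(K(e^{-2φ̲_p(r)/(n-m)}·r)) · e^{-2φ̲_p(r)/(n-m)} ) = +∞ for some r₀ > 0
is independent of the base point p ∈ M. -/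
theorem condition_K_base_point_independent
    {M : Type*} [MetricSpace M] (φ : M → ℝ)
    (hbdd : ∀ (x : M) (r : ℝ), BddBelow (φ '' closedBall x r))
    (n m : ℝ) (hnm : 0 < n - m)
    (K : ℝ → ℝ) (hKcont : Continuous K) (hKpos : ∀ r, 0 ≤ r → 0 < K r)
    (hKmono : ∀ r₁ r₂, 0 ≤ r₁ → r₁ ≤ r₂ → K r₁ ≤ K r₂)
    (φlow : M → ℝ → ℝ) (hφlow : ∀ x r, φlow x r = sInf (φ '' closedBall x r))
    (p : M)
    (hp : ∃ r₀ > (0:ℝ), ¬ IntegrableOn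
      (fun r => 1 / (Real.sqrt (K (Real.exp (-2 * φlow p r / (n - m)) * r)) *
        Real.exp (-2 * φlow p r / (n - m)))) (Ioi r₀) volume) :
    ∀ q : M, ∃ r₀ > (0:ℝ), ¬ IntegrableOn
      (fun r => 1 / (Real.sqrt (K (Real.exp (-2 * φlow q r / (n - m)) * r)) *
        Real.exp (-2 * φlow q r / (n - m)))) (Ioi r₀) volume :=
  condition_K_base_point_independent_general φ hbdd n m hnm K hKpos hKmono φlow hφlow p hp
end

section
/- Let f : (0,∞) → (0,∞) and g : (0,∞) → (0,∞) be positive integrable-on-compacts functions such that f(r₂)/f(r₁) ≤ g(r₂)/g(r₁) whenever 0 < r₁ < r₂. Then for 0 ≤ r₀ < r_a ≤ r₁' and 0 ≤ r₀ ≤ r_b < r₁', (∫_{r_b}^{r₁'} f) / (∫_{r₀}^{r_a} f) ≤ (∫_{r_b}^{r₁'} g) / (∫_{r₀}^{r_a} g). -/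
/-!
Writing `F(S) = ∫_S f`, `G(S) = ∫_S g`, `A = (r₀, r_a]` and `B = (r_b, r₁']`, the claim is
`F(B) G(A) ≤ F(A) G(B)`. When every point of `A` lies below every point of `B`, this is the double
integral over `A × B` of the pointwise inequality `f(y) g(x) ≤ f(x) g(y)`. In general split `A` and
`B` along their overlap `A ∩ B`: the cross term `F(B) G(A) - F(A) G(B)` becomes the sum of the three
such terms for the pairs `(A \ B, A ∩ B)`, `(A \ B, B \ A)` and `(A ∩ B, B \ A)`, each of which is
nonpositive.
-/

open Set intervalIntegral MeasureTheory

section CrossInequality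

variable {α : Type*} [MeasurableSpace α] {μ : Measure α} {f g : α → ℝ} {s t : Set α}

theorem setIntegral_mul_setIntegral_le_of_forall_mem
    (hfs : IntegrableOn f s μ) (hgs : IntegrableOn g s μ)
    (hft : IntegrableOn f t μ) (hgt : IntegrableOn g t μ)
    (hs : MeasurableSet s) (ht : MeasurableSet t)
    (hfg : ∀ x ∈ s, ∀ y ∈ t, f y * g x ≤ f x * g y) :
    (∫ y in t, f y ∂μ) * (∫ x in s, g x ∂μ) ≤ (∫ x in s, f x ∂μ) * (∫ y in t, g y ∂μ) := by
  have inner (y : α) (hy : y ∈ t) :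
      f y * ∫ x in s, g x ∂μ ≤ g y * ∫ x in s, f x ∂μ := by
    rw [← MeasureTheory.integral_const_mul, ← MeasureTheory.integral_const_mul]
    exact setIntegral_mono_on (hgs.const_mul _) (hfs.const_mul _) hs
      fun x hx => (hfg x hx y hy).trans_eq (mul_comm _ _)
  calc (∫ y in t, f y ∂μ) * (∫ x in s, g x ∂μ)
      = ∫ y in t, f y * ∫ x in s, g x ∂μ ∂μ := (MeasureTheory.integral_mul_const _ _).symm
    _ ≤ ∫ y in t, g y * ∫ x in s, f x ∂μ ∂μ :=
        setIntegral_mono_on (hft.mul_const _) (hgt.mul_const _) ht inner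
    _ = (∫ x in s, f x ∂μ) * (∫ y in t, g y ∂μ) := by
        rw [MeasureTheory.integral_mul_const, mul_comm]

theorem setIntegral_mul_setIntegral_le_of_forall_mem_sdiff
    (hfs : IntegrableOn f s μ) (hgs : IntegrableOn g s μ)
    (hft : IntegrableOn f t μ) (hgt : IntegrableOn g t μ)
    (hs : MeasurableSet s) (ht : MeasurableSet t)
    (h_sdiff : ∀ x ∈ s \ t, ∀ y ∈ t, f y * g x ≤ f x * g y)
    (h_inter : ∀ x ∈ s ∩ t, ∀ y ∈ t \ s, f y * g x ≤ f x * g y) :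
    (∫ y in t, f y ∂μ) * (∫ x in s, g x ∂μ) ≤ (∫ x in s, f x ∂μ) * (∫ y in t, g y ∂μ) := by
  have sdiff_inter := setIntegral_mul_setIntegral_le_of_forall_mem
    (hfs.mono_set sdiff_subset) (hgs.mono_set sdiff_subset)
    (hfs.mono_set inter_subset_left) (hgs.mono_set inter_subset_left)
    (hs.diff ht) (hs.inter ht) fun x hx y hy => h_sdiff x hx y hy.2
  have sdiff_sdiff := setIntegral_mul_setIntegral_le_of_forall_mem
    (hfs.mono_set sdiff_subset) (hgs.mono_set sdiff_subset)
    (hft.mono_set sdiff_subset) (hgt.mono_set sdiff_subset)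
    (hs.diff ht) (ht.diff hs) fun x hx y hy => h_sdiff x hx y hy.1
  have inter_sdiff := setIntegral_mul_setIntegral_le_of_forall_mem
    (hfs.mono_set inter_subset_left) (hgs.mono_set inter_subset_left)
    (hft.mono_set sdiff_subset) (hgt.mono_set sdiff_subset)
    (hs.inter ht) (ht.diff hs) h_inter
  rw [← integral_inter_add_sdiff ht hfs, ← integral_inter_add_sdiff ht hgs,
    ← integral_inter_add_sdiff hs hft, ← integral_inter_add_sdiff hs hgt, inter_comm t s]
  linear_combination sdiff_inter + sdiff_sdiff + inter_sdiff

end CrossInequality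

/-- Zhu's integral-ratio lemma: If f, g are positive locally
interval-integrable functions on (0,∞) with f(r₂)g(r₁) ≤ f(r₁)g(r₂) for 0 < r₁ < r₂
(i.e. f/g nonincreasing), then for 0 ≤ r₀ < r_a ≤ r₁' and 0 ≤ r₀ ≤ r_b < r₁':
(∫_{r_b}^{r₁'} f)/(∫_{r₀}^{r_a} f) ≤ (∫_{r_b}^{r₁'} g)/(∫_{r₀}^{r_a} g). -/
theorem integral_ratio_monotone
    (f g : ℝ → ℝ)
    (hf : ∀ a b : ℝ, 0 ≤ a → IntervalIntegrable f MeasureTheory.volume a b)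
    (hg : ∀ a b : ℝ, 0 ≤ a → IntervalIntegrable g MeasureTheory.volume a b)
    (hfpos : ∀ r : ℝ, 0 < r → 0 < f r) (hgpos : ∀ r : ℝ, 0 < r → 0 < g r)
    (hratio : ∀ r₁ r₂ : ℝ, 0 < r₁ → r₁ < r₂ → f r₂ * g r₁ ≤ f r₁ * g r₂)
    (r₀ ra rb r₁' : ℝ)
    (h₀a : 0 ≤ r₀) (h₀a' : r₀ < ra) (ha₁ : ra ≤ r₁')
    (h₀b : r₀ ≤ rb) (hb₁ : rb < r₁') :
    (∫ r in rb..r₁', f r) / (∫ r in r₀..ra, f r) ≤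
      (∫ r in rb..r₁', g r) / (∫ r in r₀..ra, g r) := by
  have hF : 0 < ∫ r in r₀..ra, f r :=
    intervalIntegral_pos_of_pos_on (hf r₀ ra h₀a) (fun x hx => hfpos x (h₀a.trans_lt hx.1)) h₀a'
  have hG : 0 < ∫ r in r₀..ra, g r :=
    intervalIntegral_pos_of_pos_on (hg r₀ ra h₀a) (fun x hx => hgpos x (h₀a.trans_lt hx.1)) h₀a'
  have hrb : 0 ≤ rb := h₀a.trans h₀b
  rw [div_le_div_iff₀ hF hG]
  simp only [intervalIntegral.integral_of_le h₀a'.le, intervalIntegral.integral_of_le hb₁.le]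
  refine (setIntegral_mul_setIntegral_le_of_forall_mem_sdiff (hf r₀ ra h₀a).1 (hg r₀ ra h₀a).1
    (hf rb r₁' hrb).1 (hg rb r₁' hrb).1 measurableSet_Ioc measurableSet_Ioc ?_ ?_).trans_eq
    (mul_comm _ _)
  · rintro x ⟨⟨hx₀, hxa⟩, hxB⟩ y ⟨hby, -⟩
    have hxb : x ≤ rb := by_contra fun h => hxB ⟨not_le.mp h, hxa.trans ha₁⟩
    exact hratio x y (h₀a.trans_lt hx₀) (hxb.trans_lt hby)
  · rintro x ⟨⟨hx₀, hxa⟩, -⟩ y ⟨⟨hby, -⟩, hyA⟩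
    have hay : ra < y := by_contra fun h => hyA ⟨h₀b.trans_lt hby, not_lt.mp h⟩
    exact hratio x y (h₀a.trans_lt hx₀) (hxa.trans_lt hay)
end

section
/- Suppose μ(B_r(p)) ≤ C·r^{a}·e^{-2φ̲_p(r)} for all r ≥ r₁, where a = 2(n-m+1) > 0, C > 0, and φ̲_p(r) := inf_{B_r(p)} φ. If ∫_{r₀}^∞ exp(2φ̲_p(r)/(n-m)) dr = +∞ for some r₀ > 0, then ∫_{r₂}^∞ r dr / log μ(B_r(p)) = +∞ for suitable r₂, i.e., Grigor'yan's volume test for stochastic completeness holds. -/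
open Set Filter MeasureTheory

/-! Since `log r = o(r)` and `exp (-2 φ̲(r) / (n - m))` is bounded below for an antitone `φ̲`,
the volume bound gives `log V(r) ≤ (1 + (n - m)) r exp (-2 φ̲(r) / (n - m))` for large `r`, that is,
`exp (2 φ̲(r) / (n - m)) ≤ (1 + (n - m)) · r / log V(r)`. The left side is not integrable at infinity,
so neither is the right side. -/

theorem MeasureTheory.LocallyIntegrable.integrableOn_Ioi_of_le {E : Type*} [NormedAddCommGroup E]
    {μ : Measure ℝ} [IsLocallyFiniteMeasure μ] {f : ℝ → E} (hf : LocallyIntegrable f μ)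
    {a b : ℝ} (hab : a ≤ b) (h : IntegrableOn f (Ioi b) μ) : IntegrableOn f (Ioi a) μ :=
  Ioc_union_Ioi_eq_Ioi hab ▸
    ((hf.integrableOn_isCompact isCompact_Icc).mono_set Ioc_subset_Icc_self).union h

namespace Real

theorem eventually_add_mul_log_le_mul (c a : ℝ) {ε : ℝ} (hε : 0 < ε) :
    ∀ᶠ r in atTop, c + a * log r ≤ ε * r := by
  have hlittleO : (fun r => c + a * log r) =o[atTop] id :=
    (Asymptotics.isLittleO_const_id_atTop c).add (isLittleO_log_id_atTop.const_mul_left a)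
  filter_upwards [hlittleO.bound hε, eventually_ge_atTop 0] with r hbound hr
  rw [norm_eq_abs, id, norm_of_nonneg hr] at hbound
  exact (le_abs_self _).trans hbound

theorem le_mul_exp_div {d : ℝ} (hd : 0 < d) (y : ℝ) : y ≤ d * exp (y / d) := by
  have h := add_one_le_exp (y / d)
  rw [div_add_one hd.ne', div_le_iff₀ hd] at h
  linarith

end Real

open Real

section VolumeGrowth

variable {V φ : ℝ → ℝ} {C a d : ℝ}

theorem eventually_log_le_mul_exp_neg_div (hC : 0 < C) (hd : 0 < d) (hφ : Antitone φ)
    (hV : ∀ᶠ r in atTop, 0 < V r ∧ V r ≤ C * r ^ a * exp (-2 * φ r)) :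
    ∀ᶠ r in atTop, log (V r) ≤ (1 + d) * r * exp (-2 * φ r / d) := by
  filter_upwards [hV, eventually_add_mul_log_le_mul (log C) a (exp_pos (-2 * φ 0 / d)),
    eventually_ge_atTop 1] with r ⟨hVpos, hVle⟩ hlog hr
  set E := exp (-2 * φ r / d)
  have hr_pos : (0 : ℝ) < r := by linarith
  have hE : exp (-2 * φ 0 / d) ≤ E :=
    exp_le_exp.2 (div_le_div_of_nonneg_right (by linarith [hφ hr_pos.le]) hd.le)
  calc log (V r) ≤ log (C * r ^ a * exp (-2 * φ r)) := log_le_log hVpos hVle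
    _ = log C + a * log r + -2 * φ r := by
      rw [log_mul (by positivity) (exp_ne_zero _), log_mul hC.ne' (by positivity),
        log_rpow hr_pos, log_exp]
    _ ≤ exp (-2 * φ 0 / d) * r + d * E := add_le_add hlog (le_mul_exp_div hd _)
    _ ≤ E * r + d * r * E := by
      gcongr
      exact le_mul_of_one_le_right hd.le hr
    _ = (1 + d) * r * E := by ring

theorem eventually_exp_div_le_mul_div_log (hC : 0 < C) (hd : 0 < d) (hφ : Antitone φ)
    (hV : ∀ᶠ r in atTop, 1 < V r ∧ V r ≤ C * r ^ a * exp (-2 * φ r)) :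
    ∀ᶠ r in atTop, exp (2 * φ r / d) ≤ (1 + d) * (r / log (V r)) := by
  have hV' := hV.mono fun r hr => And.intro (zero_lt_one.trans hr.1) hr.2
  filter_upwards [hV, eventually_log_le_mul_exp_neg_div hC hd hφ hV'] with r ⟨hV1, _⟩ hlog
  rw [← mul_div_assoc, le_div_iff₀ (log_pos hV1)]
  calc exp (2 * φ r / d) * log (V r)
      ≤ exp (2 * φ r / d) * ((1 + d) * r * exp (-2 * φ r / d)) := by gcongr
    _ = (1 + d) * r * (exp (2 * φ r / d) * exp (-2 * φ r / d)) := by ring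
    _ = (1 + d) * r := by rw [← exp_add, neg_mul, neg_div, add_neg_cancel, exp_zero, mul_one]

end VolumeGrowth

theorem grigoryan_volume_test_general
    (n m C r₀ r₁ : ℝ) (hnm : 0 < n - m) (hC : 0 < C)
    (V φlow : ℝ → ℝ)
    (hφmono : Antitone φlow)
    (hV1 : ∀ r, r₁ ≤ r → 1 < V r)
    (hVbound : ∀ r, r₁ ≤ r →
      V r ≤ C * r ^ (2 * (n - m + 1)) * Real.exp (-2 * φlow r))
    (hdiv : ¬ IntegrableOn (fun r => Real.exp (2 * φlow r / (n - m))) (Ioi r₀) volume) :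
    ∃ r₂ > (0:ℝ), ¬ IntegrableOn (fun r => r / Real.log (V r)) (Ioi r₂) volume := by
  have hg : Antitone fun r => exp (2 * φlow r / (n - m)) := fun x y hxy =>
    exp_le_exp.2 (div_le_div_of_nonneg_right (by linarith [hφmono hxy]) hnm.le)
  have hV := (eventually_ge_atTop r₁).mono fun r hr => And.intro (hV1 r hr) (hVbound r hr)
  obtain ⟨R, hR⟩ := eventually_atTop.1
    ((eventually_exp_div_le_mul_div_log hC hnm hφmono hV).and (eventually_gt_atTop 0))
  refine ⟨max R r₀, lt_max_of_lt_left (hR R le_rfl).2, fun hf => hdiv ?_⟩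
  refine hg.locallyIntegrable.integrableOn_Ioi_of_le (le_max_right R r₀) ?_
  refine (hf.const_mul (1 + (n - m))).mono' hg.measurable.aestronglyMeasurable ?_
  filter_upwards [ae_restrict_mem measurableSet_Ioi] with r hr
  rw [norm_of_nonneg (exp_pos _).le]
  exact (hR r (le_max_left R r₀ |>.trans hr.le)).1

/-- Grigor'yan volume test: Suppose the volume function V(r) = μ(B_r(p))
satisfies 1 < V(r) and V(r) ≤ C·r^a·e^{-2φ̲_p(r)} for r ≥ r₁, where a = 2(n-m+1) > 0,
C > 0, and φ̲_p is nonincreasing. If ∫_{r₀}^∞ e^{2φ̲_p(r)/(n-m)} dr = +∞ for some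
r₀ > 0, then ∫_{r₂}^∞ r dr / log V(r) = +∞ for a suitable r₂. -/
theorem grigoryan_volume_test
    (n m C r₀ r₁ : ℝ) (hnm : 0 < n - m) (hC : 0 < C) (hr₀ : 0 < r₀) (hr₁ : 0 < r₁)
    (V φlow : ℝ → ℝ)
    (hVmono : MonotoneOn V (Ioi 0))
    (hφmono : Antitone φlow)
    (hV1 : ∀ r, r₁ ≤ r → 1 < V r)
    (hVbound : ∀ r, r₁ ≤ r →
      V r ≤ C * r ^ (2 * (n - m + 1)) * Real.exp (-2 * φlow r))
    (hdiv : ¬ IntegrableOn (fun r => Real.exp (2 * φlow r / (n - m))) (Ioi r₀) volume) :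
    ∃ r₂ > (0:ℝ), ¬ IntegrableOn (fun r => r / Real.log (V r)) (Ioi r₂) volume :=
  grigoryan_volume_test_general n m C r₀ r₁ hnm hC V φlow hφmono hV1 hVbound hdiv
end

section
/- Let f(x) := (1+|x|²)^{-1/4} on ℝⁿ. Then for K ≥ (n-m)/2 > 0, i.e. K/(n-m) ≥ 1/2, one has Hess f(x) + (K/(n-m)) f(x)^{-3} Eₙ ⪰ (5/4)(1+|x|²)^{-9/4} x xᵀ ⪰ 0, so the matrix Hess f(x) + (K/(n-m)) f(x)^{-3} Eₙ is positive semidefinite for every x ∈ ℝⁿ. -/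
open Real
open scoped RealInnerProductSpace

section Aux
variable {E : Type*} [NormedAddCommGroup E] [InnerProductSpace ℝ E]

lemma aux_gpos (x : E) : (0:ℝ) < 1 + ‖x‖ ^ 2 := by positivity

lemma aux_hg (x : E) : HasFDerivAt (fun y : E => 1 + ‖y‖ ^ 2) ((2:ℝ) • innerSL ℝ x) x := by
  have := (hasFDerivAt_const (1:ℝ) x).add ((hasStrictFDerivAt_norm_sq x).hasFDerivAt)
  refine this.congr_fderiv ?_
  ext v
  simp [two_smul]

lemma aux_hf1 (x : E) :
    HasFDerivAt (fun y : E => (1 + ‖y‖ ^ 2) ^ (-(1/4 : ℝ)))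
      ((-(1/2 : ℝ) * (1 + ‖x‖ ^ 2) ^ (-(5/4 : ℝ))) • innerSL ℝ x) x := by
  have h := (Real.hasDerivAt_rpow_const (x := 1 + ‖x‖ ^ 2) (p := -(1/4 : ℝ))
    (Or.inl (aux_gpos x).ne')).comp_hasFDerivAt x (aux_hg x)
  refine h.congr_fderiv ?_
  ext v
  have h54 : (-(1/4 : ℝ)) - 1 = -(5/4 : ℝ) := by norm_num
  simp only [h54, ContinuousLinearMap.coe_smul', Pi.smul_apply, smul_eq_mul, smul_smul]
  ring

lemma aux_hc (x : E) :
    HasFDerivAt (fun y : E => -(1/2 : ℝ) * (1 + ‖y‖ ^ 2) ^ (-(5/4 : ℝ)))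
      (((5/4 : ℝ) * (1 + ‖x‖ ^ 2) ^ (-(9/4 : ℝ))) • innerSL ℝ x) x := by
  have h := ((Real.hasDerivAt_rpow_const (x := 1 + ‖x‖ ^ 2) (p := -(5/4 : ℝ))
    (Or.inl (aux_gpos x).ne')).comp_hasFDerivAt x (aux_hg x)).const_mul (-(1/2 : ℝ))
  refine h.congr_fderiv ?_
  ext v
  have h94 : (-(5/4 : ℝ)) - 1 = -(9/4 : ℝ) := by norm_num
  simp only [h94, ContinuousLinearMap.coe_smul', Pi.smul_apply, smul_eq_mul, smul_smul]
  ring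

lemma aux_hess (x v : E) :
    (fderiv ℝ (fderiv ℝ (fun y : E => (1 + ‖y‖ ^ 2) ^ (-(1/4 : ℝ)))) x v) v =
      (5/4 : ℝ) * (1 + ‖x‖ ^ 2) ^ (-(9/4 : ℝ)) * ⟪x, v⟫ ^ 2
        - (1/2 : ℝ) * (1 + ‖x‖ ^ 2) ^ (-(5/4 : ℝ)) * ‖v‖ ^ 2 := by
  have hd1 : fderiv ℝ (fun y : E => (1 + ‖y‖ ^ 2) ^ (-(1/4 : ℝ))) =
      fun y : E => (-(1/2 : ℝ) * (1 + ‖y‖ ^ 2) ^ (-(5/4 : ℝ))) • innerSL ℝ y := by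
    funext y; exact (aux_hf1 y).fderiv
  rw [hd1]
  let B : E →L[ℝ] E →L[ℝ] ℝ := innerSL ℝ
  have h2 : HasFDerivAt
      (fun y : E => (-(1/2 : ℝ) * (1 + ‖y‖ ^ 2) ^ (-(5/4 : ℝ))) • innerSL ℝ y)
      ((-(1/2 : ℝ) * (1 + ‖x‖ ^ 2) ^ (-(5/4 : ℝ))) • B +
        (((5/4 : ℝ) * (1 + ‖x‖ ^ 2) ^ (-(9/4 : ℝ))) • innerSL ℝ x).smulRight (innerSL ℝ x)) x :=
    (aux_hc x).smul (B.hasFDerivAt)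
  rw [h2.fderiv]
  simp [B, real_inner_self_eq_norm_sq, real_inner_comm v x, ContinuousLinearMap.smulRight_apply, innerSL_apply_apply]
  have hv : (innerSL ℝ v) v = ‖v‖ ^ 2 := real_inner_self_eq_norm_sq v
  rw [hv]
  ring

end Aux

/-- For f(x) = (1+|x|²)^{-1/4} on ℝⁿ and K ≥ (n-m)/2 > 0, the quadratic
form Hess f(x) + (K/(n-m)) f(x)^{-3} Eₙ is positive semidefinite; more precisely it is
bounded below by the rank-one form (5/4)(1+|x|²)^{-9/4} x xᵀ. -/
theorem hessian_model_potential_psd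
    (N : ℕ) (n m K : ℝ) (hnm : 0 < n - m) (hK : (n - m) / 2 ≤ K)
    (f : EuclideanSpace ℝ (Fin N) → ℝ)
    (hf : f = fun x => (1 + ‖x‖ ^ 2) ^ (-(1/4 : ℝ))) :
    ∀ (x v : EuclideanSpace ℝ (Fin N)),
      (5/4) * (1 + ‖x‖ ^ 2) ^ (-(9/4 : ℝ)) * ⟪x, v⟫ ^ 2 ≤
        (fderiv ℝ (fderiv ℝ f) x v) v + K / (n - m) * (f x) ^ (-(3:ℝ)) * ‖v‖ ^ 2 ∧
      0 ≤ (fderiv ℝ (fderiv ℝ f) x v) v + K / (n - m) * (f x) ^ (-(3:ℝ)) * ‖v‖ ^ 2 := by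
  intro x v
  subst hf
  rw [aux_hess]
  have hg1 : (1:ℝ) ≤ 1 + ‖x‖ ^ 2 := le_add_of_nonneg_right (sq_nonneg _)
  have hg0 : (0:ℝ) ≤ 1 + ‖x‖ ^ 2 := by positivity
  have hfx : ((1 + ‖x‖ ^ 2) ^ (-(1/4 : ℝ))) ^ (-(3:ℝ)) = (1 + ‖x‖ ^ 2) ^ ((3:ℝ)/4) := by
    rw [← Real.rpow_mul hg0]; norm_num
  rw [hfx]
  have h1 : (1/2 : ℝ) ≤ K / (n - m) := by
    rw [le_div_iff₀ hnm]; linarith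
  have hexp : (1 + ‖x‖ ^ 2) ^ (-(5/4 : ℝ)) ≤ (1 + ‖x‖ ^ 2) ^ ((3:ℝ)/4) :=
    Real.rpow_le_rpow_of_exponent_le hg1 (by norm_num)
  have hp5 : (0:ℝ) ≤ (1 + ‖x‖ ^ 2) ^ (-(5/4 : ℝ)) := Real.rpow_nonneg hg0 _
  have hp9 : (0:ℝ) ≤ (1 + ‖x‖ ^ 2) ^ (-(9/4 : ℝ)) := Real.rpow_nonneg hg0 _
  have key : (1/2 : ℝ) * (1 + ‖x‖ ^ 2) ^ (-(5/4 : ℝ)) ≤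
      K / (n - m) * (1 + ‖x‖ ^ 2) ^ ((3:ℝ)/4) :=
    mul_le_mul h1 hexp hp5 (le_trans (by norm_num) h1)
  have key2 := mul_le_mul_of_nonneg_right key (sq_nonneg ‖v‖)
  have hq : (0:ℝ) ≤ (5/4) * (1 + ‖x‖ ^ 2) ^ (-(9/4 : ℝ)) * ⟪x, v⟫ ^ 2 := by positivity
  constructor <;> nlinarith [key2, hq]
end
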